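/- arXiv:0706.1907 — 2 statements merged into one kernel-verified Lean document; each statement's English description precedes it below -/
import Mathlib

section
/- Let B be a commutative ring, r a positive integer, and N a finitely generated B-submodule of B^r. Suppose the image of the natural map ⋀^r N → ⋀^r B^r ≅ B is a principal ideal generated by the image of a decomposable element n₁ ∧ ⋯ ∧ n_r with n₁,…,n_r ∈ N, and that this generator is a nonzerodivisor in B. Then N is a free B-module of rank r with basis n₁,…,n_r. -/
/-! Write `d = det (n₁, …, n_r)`. For `v ∈ N`, Cramer's rule gives
`d • v = ∑ i, det (n with row i replaced by v) • nᵢ`, and each of these determinants lies in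
`(d)` by hypothesis; cancelling the nonzerodivisor `d` puts `v` in the span of the `nᵢ`.
They are independent since, after multiplying by the adjugate, `∑ cᵢ • nᵢ = 0` gives `d • c = 0`. -/

open Submodule Set
open scoped nonZeroDivisors

namespace Matrix

variable {m R : Type*} [Fintype m] [DecidableEq m] [CommRing R]

/-- Cramer's rule, read along the rows of `A`. -/
theorem det_smul_eq_sum_det_updateRow_smul (A : Matrix m m R) (v : m → R) :
    A.det • v = ∑ i, (A.updateRow i v).det • A i := by
  rw [← det_transpose, ← mulVec_cramer, mulVec_transpose, vecMul_eq_sum]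
  simp only [cramer_transpose_apply]

theorem linearIndependent_rows_of_det_mem_nonZeroDivisors {A : Matrix m m R}
    (hA : A.det ∈ R⁰) : LinearIndependent R (fun i ↦ A i) := by
  rw [Fintype.linearIndependent_iff]
  intro c hc
  rw [← vecMul_eq_sum] at hc
  exact congrFun (eq_zero_of_det_mem_nonZeroDivisors_of_vecMul_eq_zero hA hc)

theorem mem_span_rows_of_det_dvd_det_updateRow {A : Matrix m m R} (hA : A.det ∈ R⁰)
    {v : m → R} (hv : ∀ i, A.det ∣ (A.updateRow i v).det) :
    v ∈ span R (range fun i ↦ A i) := by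
  choose c hc using hv
  have hsmul : A.det • v = A.det • ∑ i, c i • A i := by
    rw [det_smul_eq_sum_det_updateRow_smul]
    simp only [hc, Finset.smul_sum, mul_smul]
  have hv : v = ∑ i, c i • A i := funext fun k ↦
    (mul_cancel_left_mem_nonZeroDivisors hA).mp (congrFun hsmul k)
  rw [hv]
  exact sum_mem fun i _ ↦ smul_mem _ _ (subset_span (mem_range_self i))

end Matrix

theorem submodule_free_of_exterior_power_principal_general
    {B : Type*} [CommRing B] {r : ℕ}
    (N : Submodule B (Fin r → B))
    (n : Fin r → (Fin r → B)) (hn : ∀ i, n i ∈ N)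
    (hgen : Ideal.span {x : B | ∃ m : Fin r → (Fin r → B),
        (∀ i, m i ∈ N) ∧ x = (Matrix.of m).det}
      = Ideal.span {(Matrix.of n).det})
    (hnzd : (Matrix.of n).det ∈ nonZeroDivisors B) :
    ∃ b : Module.Basis (Fin r) B N, ∀ i, (b i : Fin r → B) = n i := by
  set A := Matrix.of n
  have hdvd : ∀ v ∈ N, ∀ i, A.det ∣ (A.updateRow i v).det := fun v hv i ↦ by
    rw [← Ideal.mem_span_singleton, ← hgen]
    refine Ideal.subset_span ⟨Function.update n i v, fun j ↦ ?_, rfl⟩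
    rcases eq_or_ne j i with rfl | hji
    · simpa using hv
    · simpa [Function.update_of_ne hji] using hn j
  have hspan : span B (range n) = N :=
    le_antisymm (span_le.2 (range_subset_iff.2 hn)) fun v hv ↦
      A.mem_span_rows_of_det_dvd_det_updateRow hnzd (hdvd v hv)
  refine ⟨(Module.Basis.span (A.linearIndependent_rows_of_det_mem_nonZeroDivisors hnzd)).map
    (LinearEquiv.ofEq _ _ hspan), fun i ↦ ?_⟩
  simp only [Module.Basis.map_apply, Module.Basis.span_apply]
  rfl

/-- Let `B` be a commutative ring, `r` a positive integer and `N` a finitely generated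
submodule of `B^r`.  Suppose that the image of the natural map `⋀^r N → ⋀^r B^r ≅ B`
(the isomorphism being given by the determinant in the standard basis, so that the image is
the ideal generated by the determinants of all matrices whose rows lie in `N`) is a principal
ideal generated by the image of the decomposable element `n₁ ∧ ⋯ ∧ n_r` (i.e. by
`det (n₁, …, n_r)`) with `n₁, …, n_r ∈ N`, and that this generator is a nonzerodivisor in `B`.
Then `N` is a free `B`-module of rank `r` with basis `n₁, …, n_r`. -/
theorem submodule_free_of_exterior_power_principal
    {B : Type*} [CommRing B] {r : ℕ} (hr : 0 < r)
    (N : Submodule B (Fin r → B)) (hfg : N.FG)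
    (n : Fin r → (Fin r → B)) (hn : ∀ i, n i ∈ N)
    (hgen : Ideal.span {x : B | ∃ m : Fin r → (Fin r → B),
        (∀ i, m i ∈ N) ∧ x = (Matrix.of m).det}
      = Ideal.span {(Matrix.of n).det})
    (hnzd : (Matrix.of n).det ∈ nonZeroDivisors B) :
    ∃ b : Module.Basis (Fin r) B N, ∀ i, (b i : Fin r → B) = n i :=
  submodule_free_of_exterior_power_principal_general N n hn hgen hnzd
end

section
/- Let S be a noetherian scheme, X and Y separated S-schemes of finite type, U a schematically dense open subscheme of X, and f : U → Y a proper S-morphism. Then the graph of f is closed in X ×_S Y; i.e., f defines a proper quasi-domination X ⇢ Y. -/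
open AlgebraicGeometry CategoryTheory CategoryTheory.Limits Opposite

universe u

namespace Nagata

/-- The data of an ideal sheaf on a scheme: an ideal of sections over each open set. -/
def IdealData (X : Scheme.{u}) : Type u := ∀ U : X.Opens, Ideal Γ(X, U)

/-- The data `I` is a coherent (equivalently, on a noetherian scheme, quasi-coherent and
locally finitely generated) sheaf of ideals. -/
structure IsCoherentIdeal {X : Scheme.{u}} (I : IdealData X) : Prop where
  map_le : ∀ {U V : X.Opens} (h : V ≤ U),
    (I U).map (X.presheaf.map (homOfLE h).op).hom ≤ I V
  qcoh : ∀ (U : X.Opens), IsAffineOpen U → ∀ f : Γ(X, U),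
    I (X.basicOpen f) = (I U).map (X.presheaf.map (homOfLE (X.basicOpen_le f)).op).hom
  fg : ∀ (U : X.Opens), IsAffineOpen U → (I U).FG

/-- The vanishing locus `V(I)` of an ideal sheaf: the points at which `I` is not the
unit ideal on any neighbourhood. -/
def vanishingLocus {X : Scheme.{u}} (I : IdealData X) : Set X :=
  {x | ∀ U : X.Opens, x ∈ U → I U ≠ ⊤}

/-- The inverse image ideal sheaf `π⁻¹ I · O_{X'}`. -/
def inverseImageIdeal {X' X : Scheme.{u}} (π : X' ⟶ X) (I : IdealData X) :
    IdealData X' := fun V =>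
  Ideal.span {s | ∃ (U : X.Opens) (t : Γ(X, U)) (e : V ≤ π ⁻¹ᵁ U),
    t ∈ I U ∧ s = π.appLE U V e t}

/-- The inverse image ideal sheaf of `I` under `π` is an invertible ideal sheaf, i.e.
locally generated by a single nonzerodivisor. -/
def InvImageInvertible {X' X : Scheme.{u}} (π : X' ⟶ X) (I : IdealData X) : Prop :=
  ∀ x : X', ∃ (V : X'.Opens), x ∈ V ∧ ∃ f : Γ(X', V),
    f ∈ nonZeroDivisors Γ(X', V) ∧ inverseImageIdeal π I V = Ideal.span {f}

/-- `π : X' ⟶ X` is the blowing-up of `X` along the ideal sheaf `I` (i.e. `Proj` of the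
Rees algebra of `I`), characterized by the universal property of the blow-up: the inverse
image ideal sheaf of `I` on `X'` is invertible, and `π` is universal among morphisms with
this property. -/
structure IsBlowUpAlong {X' X : Scheme.{u}} (π : X' ⟶ X) (I : IdealData X) : Prop where
  invertible : InvImageInvertible π I
  universal : ∀ (Y : Scheme.{u}) (g : Y ⟶ X), InvImageInvertible g I →
    ∃! h : Y ⟶ X', h ≫ π = g

/-- An open subscheme is schematically dense iff restriction of sections to it is injective,
equivalently the scheme-theoretic image of `U ↪ X` is all of `X`, equivalently `U` contains
all associated points of `X`. -/
def SchematicallyDense {X : Scheme.{u}} (U : X.Opens) : Prop :=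
  ∀ V : X.Opens, Function.Injective
    (X.presheaf.map (homOfLE (inf_le_left : V ⊓ U ≤ V)).op)

/-- The composite with the projection to `Y` is `f`, and that projection is separated, being a
base change of `X ⟶ S`. -/
lemma isProper_pullbackLift {S X Y Z : Scheme.{u}} (p : X ⟶ S) (q : Y ⟶ S) [IsSeparated p]
    (g : Z ⟶ X) (f : Z ⟶ Y) [IsProper f] (h : g ≫ p = f ≫ q) :
    IsProper (pullback.lift g f h) := by
  have : IsProper (pullback.lift g f h ≫ pullback.snd p q) := by
    rw [pullback.lift_snd]; infer_instance
  exact .of_comp _ (pullback.snd p q)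

theorem graph_closed_of_proper_general
    {S X Y : Scheme.{u}}
    (p : X ⟶ S) (q : Y ⟶ S)
    [IsSeparated p]
    (U : X.Opens)
    (f : U.toScheme ⟶ Y) [IsProper f] (hf : U.ι ≫ p = f ≫ q) :
    IsClosed (Set.range (pullback.lift U.ι f hf).base) := by
  have := isProper_pullbackLift p q U.ι f hf
  exact (pullback.lift U.ι f hf).isClosedMap.isClosed_range

/-- Let `S` be a noetherian scheme, `X` and `Y` separated `S`-schemes of finite type, `U` a
schematically dense open subscheme of `X`, and `f : U ⟶ Y` a proper `S`-morphism.  Then the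
graph of `f` is closed in `X ×_S Y`; i.e. `f` defines a proper quasi-domination `X ⇢ Y`. -/
theorem graph_closed_of_proper
    {S X Y : Scheme.{u}} [IsNoetherian S]
    (p : X ⟶ S) (q : Y ⟶ S)
    [IsSeparated p] [LocallyOfFiniteType p] [QuasiCompact p]
    [IsSeparated q] [LocallyOfFiniteType q] [QuasiCompact q]
    (U : X.Opens) (hU : SchematicallyDense U)
    (f : U.toScheme ⟶ Y) [IsProper f] (hf : U.ι ≫ p = f ≫ q) :
    IsClosed (Set.range (pullback.lift U.ι f hf).base) :=
  graph_closed_of_proper_general p q U f hf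

end Nagata
end
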